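/- Let s ∈ [0,T] and let Z_T ∈ L¹(K_T*;F_T,P). Then E_P[ esssup_{η ∈ A_{s,T} ∩ L_b⁰} E_P[η·Z_T | F_s] ] = sup_{η ∈ A_{s,T} ∩ L_b⁰} E_P[η·Z_T]. -/

import Mathlib

/-!
The conditional expectations `E[η·Z | F_s]`, `η ∈ A_{s,T} ∩ L_b⁰`, form an upward directed
family: trading like `η₁` on the `F_s`-event where its conditional value is the larger one and
like `η₂` elsewhere (both strategies start from zero at time `s`) again gives an admissible,
bounded-below terminal position, whose conditional value is the maximum of the two. The essential
supremum of a directed family is the increasing limit of a sequence from the family, so monotone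
convergence exchanges it with the expectation.
-/

open MeasureTheory Filter Set

noncomputable section

namespace TransactionCosts

variable {Ω : Type*} [m0 : MeasurableSpace Ω]

/-- Market data: a filtered probability space satisfying (versions of) the usual
conditions, a strictly positive càdlàg adapted integrable price process `S` on `[0,T]`,
and proportional transaction costs `lam ∈ (0,1)`. -/
structure Market (Ω : Type*) [m0 : MeasurableSpace Ω] where
  P : Measure Ω
  probP : IsProbabilityMeasure P
  F : Filtration ℝ m0
  T : ℝ
  T_pos : 0 < T
  F_rightCont : ∀ t : ℝ,
    (F t : MeasurableSpace Ω) = ⨅ u : {u : ℝ // t < u}, (F u.1 : MeasurableSpace Ω)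
  F0_trivial : ∀ A : Set Ω, MeasurableSet[F 0] A → P A = 0 ∨ P A = 1
  FT_full : (F T : MeasurableSpace Ω) = m0
  S : ℝ → Ω → ℝ
  S_adapted : ∀ t : ℝ, StronglyMeasurable[F t] (S t)
  S_pos : ∀ t ω, 0 < S t ω
  S_rightCont : ∀ ω t, ContinuousWithinAt (fun u => S u ω) (Ici t) t
  S_leftLim : ∀ ω t, ∃ l : ℝ, Tendsto (fun u => S u ω) (nhdsWithin t (Iio t)) (nhds l)
  S_int : ∀ t : ℝ, Integrable (S t) P
  lam : ℝ
  lam_pos : 0 < lam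
  lam_lt_one : lam < 1

/-- Generators of the predictable σ-algebra: stochastic intervals `(a,b] × A`, `A ∈ F_a`. -/
def predictableSets (F : Filtration ℝ m0) : Set (Set (ℝ × Ω)) :=
  {E | ∃ (a b : ℝ) (A : Set Ω), MeasurableSet[F a] A ∧ E = Ioc a b ×ˢ A}

/-- A process is predictable if it is measurable for the predictable σ-algebra. -/
def Predictable (F : Filtration ℝ m0) (f : ℝ → Ω → ℝ) : Prop :=
  Measurable[MeasurableSpace.generateFrom (predictableSets F)] (Function.uncurry f)

/-- `f` is a martingale under `Q` on the time interval `[s,t]`. -/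
def MartingaleOn (F : Filtration ℝ m0) (Q : Measure Ω) (f : ℝ → Ω → ℝ) (s t : ℝ) : Prop :=
  (∀ u ∈ Icc s t, StronglyMeasurable[F u] (f u)) ∧
  (∀ u ∈ Icc s t, Integrable (f u) Q) ∧
  ∀ u ∈ Icc s t, ∀ v ∈ Icc s t, u ≤ v →
    MeasureTheory.condExp (F u) Q (f v) =ᵐ[Q] f u

/-- The process `f` stopped at the stopping time `τ ∨ s`. -/
def stoppedAt (f : ℝ → Ω → ℝ) (s : ℝ) (τ : Ω → ℝ) : ℝ → Ω → ℝ :=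
  fun u ω => f (min u (max s (τ ω))) ω

/-- `f` is a local martingale under `Q` on the time interval `[s,t]`. -/
def LocalMartingaleOn (F : Filtration ℝ m0) (Q : Measure Ω) (f : ℝ → Ω → ℝ) (s t : ℝ) :
    Prop :=
  (∀ u ∈ Icc s t, StronglyMeasurable[F u] (f u)) ∧
  ∃ τ : ℕ → Ω → ℝ, (∀ n, IsStoppingTime F (fun ω => ((τ n ω : ℝ) : WithTop ℝ))) ∧
    (∀ n ω, τ n ω ≤ τ (n + 1) ω) ∧
    (∀ᵐ ω ∂Q, ∃ N : ℕ, ∀ n ≥ N, t ≤ τ n ω) ∧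
    ∀ n, MartingaleOn F Q (stoppedAt f s (τ n)) s t

/-- `(Q, Stil)` is a consistent price system on `[s,t]` for transaction costs `lam'`. -/
def IsCPS (M : Market Ω) (lam' s t : ℝ) (Q : Measure Ω) (Stil : ℝ → Ω → ℝ) : Prop :=
  IsProbabilityMeasure Q ∧ Q ≪ M.P ∧ M.P ≪ Q ∧
  MartingaleOn M.F Q Stil s t ∧
  ∀ u ∈ Icc s t, ∀ᵐ ω ∂M.P,
    (1 - lam') * M.S u ω ≤ Stil u ω ∧ Stil u ω ≤ (1 + lam') * M.S u ω

/-- `(Q, Stil)` is a consistent local price system on `[s,t]` for transaction costs `lam'`. -/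
def IsLocalCPS (M : Market Ω) (lam' s t : ℝ) (Q : Measure Ω) (Stil : ℝ → Ω → ℝ) : Prop :=
  IsProbabilityMeasure Q ∧ Q ≪ M.P ∧ M.P ≪ Q ∧
  LocalMartingaleOn M.F Q Stil s t ∧
  ∀ u ∈ Icc s t, ∀ᵐ ω ∂M.P,
    (1 - lam') * M.S u ω ≤ Stil u ω ∧ Stil u ω ≤ (1 + lam') * M.S u ω

/-- `CPS(s,T)`, as a set of pairs. -/
def CPS (M : Market Ω) (s : ℝ) : Set (Measure Ω × (ℝ → Ω → ℝ)) :=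
  {p | IsCPS M M.lam s M.T p.1 p.2}

/-- `CPS_loc(s,T)`, as a set of pairs. -/
def CPSloc (M : Market Ω) (s : ℝ) : Set (Measure Ω × (ℝ → Ω → ℝ)) :=
  {p | IsLocalCPS M M.lam s M.T p.1 p.2}

/-- The set `Q(s,T)` of measures occurring in consistent price systems. -/
def Qset (M : Market Ω) (s : ℝ) : Set (Measure Ω) :=
  {Q | ∃ Stil, IsCPS M M.lam s M.T Q Stil}

/-- The set `Q_loc(s,T)` of measures occurring in consistent local price systems. -/
def QsetLoc (M : Market Ω) (s : ℝ) : Set (Measure Ω) :=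
  {Q | ∃ Stil, IsLocalCPS M M.lam s M.T Q Stil}

/-- `X ∈ L¹(F_s, Q)` : `F_s`-measurable and integrable under every `Q ∈ Q(s,T)`. -/
def MemL1Q (M : Market Ω) (s : ℝ) (X : Ω → ℝ) : Prop :=
  StronglyMeasurable[M.F s] X ∧ ∀ Q ∈ Qset M s, Integrable X Q

/-- `X ∈ L¹₊(F_s, Q)`. -/
def MemL1plusQ (M : Market Ω) (s : ℝ) (X : Ω → ℝ) : Prop :=
  MemL1Q M s X ∧ ∀ᵐ ω ∂M.P, 0 ≤ X ω

/-- `X ∈ L^∞(F_s, Q)` : `F_s`-measurable and (essentially) bounded. -/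
def MemLinfQ (M : Market Ω) (s : ℝ) (X : Ω → ℝ) : Prop :=
  StronglyMeasurable[M.F s] X ∧ ∃ C : ℝ, ∀ᵐ ω ∂M.P, |X ω| ≤ C

/-- `X ∈ L^∞₊(F_s, Q)`. -/
def MemLinfplusQ (M : Market Ω) (s : ℝ) (X : Ω → ℝ) : Prop :=
  MemLinfQ M s X ∧ ∀ᵐ ω ∂M.P, 0 ≤ X ω

/-- `X ∈ L¹(F_s, Q_loc)`. -/
def MemL1Qloc (M : Market Ω) (s : ℝ) (X : Ω → ℝ) : Prop :=
  StronglyMeasurable[M.F s] X ∧ ∀ Q ∈ QsetLoc M s, Integrable X Q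

/-- `X ∈ L¹₊(F_s, Q_loc)`. -/
def MemL1plusQloc (M : Market Ω) (s : ℝ) (X : Ω → ℝ) : Prop :=
  MemL1Qloc M s X ∧ ∀ᵐ ω ∂M.P, 0 ≤ X ω

/-- The solvency cone `K_t(ω)`, generated by `(1+λ)S e₁ - e₂` and `-e₁ + e₂/((1-λ)S)`. -/
def solvCone (lam St : ℝ) : Set (ℝ × ℝ) :=
  {x | ∃ a b : ℝ, 0 ≤ a ∧ 0 ≤ b ∧
    x = (a * ((1 + lam) * St) - b, -a + b / ((1 - lam) * St))}

/-- The (positive) polar cone `{y : ⟨x,y⟩ ≥ 0 ∀ x ∈ C}`. -/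
def polarCone (C : Set (ℝ × ℝ)) : Set (ℝ × ℝ) :=
  {y | ∀ x ∈ C, 0 ≤ x.1 * y.1 + x.2 * y.2}

/-- Euclidean inner product on `ℝ²`. -/
def dot (x y : ℝ × ℝ) : ℝ := x.1 * y.1 + x.2 * y.2

/-- `Z ∈ L¹(K_T^*; F_T, P)`. -/
def MemL1Polar (M : Market Ω) (Z : Ω → ℝ × ℝ) : Prop :=
  AEStronglyMeasurable Z M.P ∧ Integrable (fun ω => (Z ω).1) M.P ∧
  Integrable (fun ω => (Z ω).2) M.P ∧
  ∀ᵐ ω ∂M.P, Z ω ∈ polarCone (solvCone M.lam (M.S M.T ω))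

/-- Liquidation value at time `t` of the position `x = (x¹, x²)`. -/
def liq (M : Market Ω) (t : ℝ) (x : ℝ × ℝ) (ω : Ω) : ℝ :=
  x.1 + max x.2 0 * ((1 - M.lam) * M.S t ω) - max (-x.2) 0 * ((1 + M.lam) * M.S t ω)

/-- `φ ⪰ ψ` : the portfolio `φ - ψ` can be liquidated to the zero portfolio at time `T`. -/
def Succeq (M : Market Ω) (φ ψ : Ω → ℝ × ℝ) : Prop :=
  ∀ᵐ ω ∂M.P, 0 ≤ liq M M.T (φ ω - ψ ω) ω

/-- A self-financing trading strategy on `[s,T]`: predictable, of finite variation, with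
the Jordan–Hahn decompositions (encoded by the pathwise measures `μ1u, μ1d, μ2u, μ2d`)
satisfying `dφ¹ ≤ (1-λ)S dφ^{2,↓} - (1+λ)S dφ^{2,↑}`. -/
def IsSelfFinancing (M : Market Ω) (s : ℝ) (φ : ℝ → Ω → ℝ × ℝ) : Prop :=
  Predictable M.F (fun t ω => (φ t ω).1) ∧ Predictable M.F (fun t ω => (φ t ω).2) ∧
  ∃ μ1u μ1d μ2u μ2d : Ω → Measure ℝ,
    (∀ ω, IsFiniteMeasure (μ1u ω)) ∧ (∀ ω, IsFiniteMeasure (μ1d ω)) ∧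
    (∀ ω, IsFiniteMeasure (μ2u ω)) ∧ (∀ ω, IsFiniteMeasure (μ2d ω)) ∧
    (∀ ω, ∀ t ∈ Icc s M.T,
      (φ t ω).1 = (φ s ω).1 + (μ1u ω (Ioc s t)).toReal - (μ1d ω (Ioc s t)).toReal ∧
      (φ t ω).2 = (φ s ω).2 + (μ2u ω (Ioc s t)).toReal - (μ2d ω (Ioc s t)).toReal) ∧
    ∀ ω, ∀ E : Set ℝ, MeasurableSet E → E ⊆ Icc s M.T →
      (μ1u ω E).toReal + ∫ t in E, (1 + M.lam) * M.S t ω ∂(μ2u ω) ≤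
      (μ1d ω E).toReal + ∫ t in E, (1 - M.lam) * M.S t ω ∂(μ2d ω)

/-- Liquidation value of the strategy `φ` at the random time `τ`. -/
def liqAtTime (M : Market Ω) (τ : Ω → ℝ) (φ : ℝ → Ω → ℝ × ℝ) (ω : Ω) : ℝ :=
  liq M (τ ω) (φ (τ ω) ω) ω

/-- `(M1, M2)`-admissibility in the numéraire-free sense. -/
def AdmissibleNFWith (M : Market Ω) (s : ℝ) (M1 M2 : Ω → ℝ) (φ : ℝ → Ω → ℝ × ℝ) : Prop :=
  ∀ τ : Ω → ℝ, IsStoppingTime M.F (fun ω => ((τ ω : ℝ) : WithTop ℝ)) → (∀ ω, τ ω ∈ Icc s M.T) →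
    ∀ᵐ ω ∂M.P, -M1 ω - M2 ω * M.S (τ ω) ω ≤ liqAtTime M τ φ ω

/-- Admissibility in the numéraire-free sense. -/
def AdmissibleNF (M : Market Ω) (s : ℝ) (φ : ℝ → Ω → ℝ × ℝ) : Prop :=
  ∃ M1 M2 : Ω → ℝ, MemL1plusQ M s M1 ∧ MemLinfplusQ M s M2 ∧
    AdmissibleNFWith M s M1 M2 φ

/-- `Ms`-admissibility in the numéraire-based sense. -/
def AdmissibleNBWith (M : Market Ω) (s : ℝ) (Ms : Ω → ℝ) (φ : ℝ → Ω → ℝ × ℝ) : Prop :=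
  ∀ τ : Ω → ℝ, IsStoppingTime M.F (fun ω => ((τ ω : ℝ) : WithTop ℝ)) → (∀ ω, τ ω ∈ Icc s M.T) →
    ∀ᵐ ω ∂M.P, -Ms ω ≤ liqAtTime M τ φ ω

/-- Admissibility in the numéraire-based sense. -/
def AdmissibleNB (M : Market Ω) (s : ℝ) (φ : ℝ → Ω → ℝ × ℝ) : Prop :=
  ∃ Ms : Ω → ℝ, MemL1plusQloc M s Ms ∧ AdmissibleNBWith M s Ms φ

/-- The set `A_{s,T}` of terminal values of admissible (numéraire-free) self-financing
strategies starting from the zero endowment. -/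
def Aset (M : Market Ω) (s : ℝ) : Set (Ω → ℝ × ℝ) :=
  {X | ∃ φ : ℝ → Ω → ℝ × ℝ, IsSelfFinancing M s φ ∧ (∀ ω, φ s ω = 0) ∧
    AdmissibleNF M s φ ∧ ∀ ω, φ M.T ω = X ω}

/-- The cone `L⁰_{1,∞}`. -/
def L01inf (M : Market Ω) (s : ℝ) : Set (Ω → ℝ × ℝ) :=
  {ξ | ∃ M1 M2 : Ω → ℝ, MemL1plusQ M s M1 ∧ MemLinfplusQ M s M2 ∧
    Succeq M ξ (fun ω => (-M1 ω, -M2 ω))}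

/-- The cone `L_b⁰`. -/
def Lb0 (M : Market Ω) : Set (Ω → ℝ × ℝ) :=
  {ξ | ∃ c : ℝ, 0 < c ∧ Succeq M ξ (fun _ => (-c, -c))}

/-- `g` is (a version of) the essential supremum of the family `(f i)_{i ∈ A}` under `P`. -/
def IsEssSupOn {ι : Type*} (P : Measure Ω) (A : Set ι) (f : ι → Ω → ℝ) (g : Ω → ℝ) : Prop :=
  (∀ i ∈ A, f i ≤ᵐ[P] g) ∧ ∀ h : Ω → ℝ, (∀ i ∈ A, f i ≤ᵐ[P] h) → g ≤ᵐ[P] h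

/-- `g` is (a version of) the essential infimum of the family `(f i)_{i ∈ A}` under `P`. -/
def IsEssInfOn {ι : Type*} (P : Measure Ω) (A : Set ι) (f : ι → Ω → ℝ) (g : Ω → ℝ) : Prop :=
  (∀ i ∈ A, g ≤ᵐ[P] f i) ∧ ∀ h : Ω → ℝ, (∀ i ∈ A, h ≤ᵐ[P] f i) → h ≤ᵐ[P] g

/-- The payoff `X_T¹ + X_T² S̃_T` of the claim `X_T` under the price system `Stil`. -/
def payoff (M : Market Ω) (XT : Ω → ℝ × ℝ) (Stil : ℝ → Ω → ℝ) : Ω → ℝ :=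
  fun ω => (XT ω).1 + (XT ω).2 * Stil M.T ω

/-- The process `F^Q_t = E_Q[X_T¹ + X_T² S̃_T | F_t]`. -/
def FQ (M : Market Ω) (XT : Ω → ℝ × ℝ) (p : Measure Ω × (ℝ → Ω → ℝ)) (t : ℝ) : Ω → ℝ :=
  MeasureTheory.condExp (M.F t) p.1 (payoff M XT p.2)

/-- The value of `F^Q` at the random time `τ`. -/
def FQat (M : Market Ω) (XT : Ω → ℝ × ℝ) (p : Measure Ω × (ℝ → Ω → ℝ)) (τ : Ω → ℝ)
    (ω : Ω) : ℝ :=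
  FQ M XT p (τ ω) ω

/-- Assumption: `S` admits a consistent local price system for every `0 < λ' ≤ λ`. -/
def Assumption1 (M : Market Ω) : Prop :=
  ∀ lam' : ℝ, 0 < lam' → lam' ≤ M.lam → ∃ Q Stil, IsLocalCPS M lam' 0 M.T Q Stil

/-- Assumption: `S` admits a consistent price system for every `0 < λ' ≤ λ`. -/
def Assumption2 (M : Market Ω) : Prop :=
  ∀ lam' : ℝ, 0 < lam' → lam' ≤ M.lam → ∃ Q Stil, IsCPS M lam' 0 M.T Q Stil

/-- `σ̂ n` for `n ∈ ℕ ∪ {∞}` : the stopping time `σ_n`, resp. the limit `σ` for `n = ∞`. -/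
def sigmaHat (σ : ℕ → Ω → ℝ) (σ' : Ω → ℝ) (n : WithTop ℕ) : Ω → ℝ :=
  fun ω => if n = ⊤ then σ' ω else σ (WithTop.untopD 0 n) ω

/-- Assumption A3 (local case), relative to the claim `XT` and the super-replication
price process `Fproc`. -/
def AssumptionA3 (M : Market Ω) (s : ℝ) (XT : Ω → ℝ × ℝ) (Fproc : ℝ → Ω → ℝ) : Prop :=
  ∃ Q0 ∈ QsetLoc M s,
    ∀ (σ : ℕ → Ω → ℝ) (σ' : Ω → ℝ),
      (∀ n, IsStoppingTime M.F (fun ω => ((σ n ω : ℝ) : WithTop ℝ))) →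
      (∀ n ω, σ n ω ∈ Icc 0 M.T) →
      (∀ n ω, σ (n + 1) ω ≤ σ n ω) →
      (∀ ω, Tendsto (fun n => σ n ω) atTop (nhds (σ' ω))) →
      ∃ pSeq : WithTop ℕ → ℕ → Measure Ω × (ℝ → Ω → ℝ),
        (∀ n k, IsLocalCPS M M.lam 0 M.T (pSeq n k).1 (pSeq n k).2) ∧
        (∀ ε : ℝ, 0 < ε → ∃ K : ℕ, ∀ k : ℕ, K ≤ k → ∀ n : WithTop ℕ,
          |(∫ ω, FQat M XT (pSeq n k) (sigmaHat σ σ' n) ω ∂Q0) -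
            ∫ ω, Fproc (sigmaHat σ σ' n ω) ω ∂Q0| < ε) ∧
        (∀ ε : ℝ, 0 < ε → ∀ k : ℕ,
          Q0 (⋃ N : ℕ, {ω | ∀ n : ℕ, N ≤ n → ∀ n0 : WithTop ℕ,
            |FQat M XT (pSeq n0 k) (σ n) ω - FQat M XT (pSeq n0 k) σ' ω| < ε}) = 1)

/-- Assumption A4 (non-local case), relative to the claim `XT` and the super-replication
price process `Fproc`. -/
def AssumptionA4 (M : Market Ω) (s : ℝ) (XT : Ω → ℝ × ℝ) (Fproc : ℝ → Ω → ℝ) : Prop :=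
  ∃ Q0 ∈ Qset M s,
    ∀ (σ : ℕ → Ω → ℝ) (σ' : Ω → ℝ),
      (∀ n, IsStoppingTime M.F (fun ω => ((σ n ω : ℝ) : WithTop ℝ))) →
      (∀ n ω, σ n ω ∈ Icc 0 M.T) →
      (∀ n ω, σ (n + 1) ω ≤ σ n ω) →
      (∀ ω, Tendsto (fun n => σ n ω) atTop (nhds (σ' ω))) →
      ∃ pSeq : WithTop ℕ → ℕ → Measure Ω × (ℝ → Ω → ℝ),
        (∀ n k, IsCPS M M.lam 0 M.T (pSeq n k).1 (pSeq n k).2) ∧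
        (∀ ε : ℝ, 0 < ε → ∃ K : ℕ, ∀ k : ℕ, K ≤ k → ∀ n : WithTop ℕ,
          |(∫ ω, FQat M XT (pSeq n k) (sigmaHat σ σ' n) ω ∂Q0) -
            ∫ ω, Fproc (sigmaHat σ σ' n ω) ω ∂Q0| < ε) ∧
        (∀ ε : ℝ, 0 < ε → ∀ k : ℕ,
          Q0 (⋃ N : ℕ, {ω | ∀ n : ℕ, N ≤ n → ∀ n0 : WithTop ℕ,
            |FQat M XT (pSeq n0 k) (σ n) ω - FQat M XT (pSeq n0 k) σ' ω| < ε}) = 1)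

/-- The set `Z(s,T)` (membership predicate). -/
def MemZ (M : Market Ω) (s : ℝ) (Z : ℝ → Ω → ℝ × ℝ) : Prop :=
  MartingaleOn M.F M.P (fun t ω => (Z t ω).1) s M.T ∧
  MartingaleOn M.F M.P (fun t ω => (Z t ω).2) s M.T ∧
  ∀ t ∈ Icc s M.T, ∀ᵐ ω ∂M.P,
    Z t ω ∈ polarCone (solvCone M.lam (M.S t ω)) ∧ Z t ω ≠ 0

/-- The set `Z_loc(s,T)` (membership predicate). -/
def MemZloc (M : Market Ω) (s : ℝ) (Z : ℝ → Ω → ℝ × ℝ) : Prop :=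
  MartingaleOn M.F M.P (fun t ω => (Z t ω).1) s M.T ∧
  LocalMartingaleOn M.F M.P (fun t ω => (Z t ω).2) s M.T ∧
  ∀ t ∈ Icc s M.T, ∀ᵐ ω ∂M.P,
    Z t ω ∈ polarCone (solvCone M.lam (M.S t ω)) ∧ Z t ω ≠ 0

/-- The measure `Q(Z)` with density `Z¹_T / E_P[Z¹_T]` with respect to `P`. -/
def QofZ (M : Market Ω) (Z : ℝ → Ω → ℝ × ℝ) : Measure Ω :=
  M.P.withDensity fun ω => ENNReal.ofReal ((Z M.T ω).1 / ∫ ω', (Z M.T ω').1 ∂M.P)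

theorem _root_.DirectedOn.exists_seq_rel_succ {α : Type*} {r : α → α → Prop} {s : Set α}
    (hs : DirectedOn r s) {j : ℕ → α} (hj : ∀ n, j n ∈ s) :
    ∃ ζ : ℕ → α, (∀ n, ζ n ∈ s) ∧ (∀ n, r (ζ n) (ζ (n + 1))) ∧ ∀ n, r (j n) (ζ n) := by
  have : Nonempty α := ⟨j 0⟩
  choose! sup hsup_mem hsup_left hsup_right using hs
  let ζ : ℕ → α := fun n ↦ Nat.rec (sup (j 0) (j 0)) (fun n z ↦ sup z (j (n + 1))) n
  have hζ : ∀ n, ζ n ∈ s := fun n ↦ by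
    induction n with
    | zero => exact hsup_mem _ (hj 0) _ (hj 0)
    | succ n ih => exact hsup_mem _ ih _ (hj _)
  refine ⟨ζ, hζ, fun n ↦ hsup_left _ (hζ n) _ (hj _), fun n ↦ ?_⟩
  cases n with
  | zero => exact hsup_left _ (hj 0) _ (hj 0)
  | succ n => exact hsup_right _ (hζ n) _ (hj _)

theorem _root_.MeasureTheory.integrable_of_tendsto_of_monotone {α : Type*} [MeasurableSpace α]
    {μ : Measure α} {f : ℕ → α → ℝ} {F : α → ℝ}
    (hf : ∀ n, Integrable (f n) μ) (h_mono : ∀ᵐ x ∂μ, Monotone fun n ↦ f n x)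
    (h_tendsto : ∀ᵐ x ∂μ, Tendsto (fun n ↦ f n x) atTop (nhds (F x)))
    (h_bdd : BddAbove (range fun n ↦ ∫ x, f n x ∂μ)) : Integrable F μ := by
  obtain ⟨c, hc⟩ := h_bdd
  have hF_meas : AEStronglyMeasurable F μ :=
    aestronglyMeasurable_of_tendsto_ae atTop (fun n ↦ (hf n).1) h_tendsto
  have hF_ge : 0 ≤ᵐ[μ] F - f 0 := by
    filter_upwards [h_mono, h_tendsto] with x hx_mono hx_tendsto
    exact sub_nonneg.2 (ge_of_tendsto' hx_tendsto fun n ↦ hx_mono (Nat.zero_le n))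
  have h_lint : Tendsto (fun n ↦ ∫⁻ x, ENNReal.ofReal (f n x - f 0 x) ∂μ) atTop
      (nhds (∫⁻ x, ENNReal.ofReal (F x - f 0 x) ∂μ)) := by
    refine lintegral_tendsto_of_tendsto_of_monotone
      (fun n ↦ ((hf n).sub (hf 0)).aemeasurable.ennreal_ofReal) ?_ ?_
    · filter_upwards [h_mono] with x hx n m hnm
      exact ENNReal.ofReal_le_ofReal (sub_le_sub_right (hx hnm) _)
    · filter_upwards [h_tendsto] with x hx
      exact ENNReal.tendsto_ofReal (hx.sub tendsto_const_nhds)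
  have h_le : ∀ n, ∫⁻ x, ENNReal.ofReal (f n x - f 0 x) ∂μ ≤
      ENNReal.ofReal (c - ∫ x, f 0 x ∂μ) := fun n ↦ by
    have h_nonneg : 0 ≤ᵐ[μ] fun x ↦ f n x - f 0 x := by
      filter_upwards [h_mono] with x hx
      exact sub_nonneg.2 (hx (Nat.zero_le n))
    rw [← ofReal_integral_eq_lintegral_ofReal (f := fun x ↦ f n x - f 0 x) ((hf n).sub (hf 0))
      h_nonneg, integral_sub (hf n) (hf 0)]
    exact ENNReal.ofReal_le_ofReal (sub_le_sub_right (hc ⟨n, rfl⟩) _)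
  have h_fin : HasFiniteIntegral (F - f 0) μ := by
    rw [hasFiniteIntegral_iff_ofReal hF_ge]
    exact (le_of_tendsto' h_lint h_le).trans_lt ENNReal.ofReal_lt_top
  simpa using (show Integrable (F - f 0) μ from ⟨hF_meas.sub (hf 0).1, h_fin⟩).add (hf 0)

theorem _root_.MeasureTheory.integral_iSup_eq_of_monotone {α : Type*} [MeasurableSpace α]
    {μ : Measure α} {f : ℕ → α → ℝ} {g : α → ℝ} {c : ℝ}
    (hf : ∀ n, Integrable (f n) μ) (h_mono : ∀ n, f n ≤ᵐ[μ] f (n + 1)) (h_le : ∀ n, f n ≤ᵐ[μ] g)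
    (h_lim : Tendsto (fun n ↦ ∫ x, f n x ∂μ) atTop (nhds c)) :
    Integrable (fun x ↦ ⨆ n, f n x) μ ∧ ∫ x, ⨆ n, f n x ∂μ = c ∧
      (∀ n, f n ≤ᵐ[μ] fun x ↦ ⨆ n, f n x) ∧ (fun x ↦ ⨆ n, f n x) ≤ᵐ[μ] g := by
  have h_ae : ∀ᵐ x ∂μ, Monotone (fun n ↦ f n x) ∧ ∀ n, f n x ≤ g x := by
    filter_upwards [ae_all_iff.2 h_mono, ae_all_iff.2 h_le] with x hx_mono hx_le
    exact ⟨monotone_nat_of_le_succ hx_mono, hx_le⟩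
  have h_bdd : ∀ᵐ x ∂μ, BddAbove (range fun n ↦ f n x) := by
    filter_upwards [h_ae] with x hx
    exact ⟨g x, forall_mem_range.2 hx.2⟩
  have h_tendsto : ∀ᵐ x ∂μ, Tendsto (fun n ↦ f n x) atTop (nhds (⨆ n, f n x)) := by
    filter_upwards [h_ae, h_bdd] with x hx hx_bdd
    exact tendsto_atTop_ciSup hx.1 hx_bdd
  have h_int := integrable_of_tendsto_of_monotone hf (h_ae.mono fun _ hx ↦ hx.1) h_tendsto
    h_lim.bddAbove_range
  refine ⟨h_int, tendsto_nhds_unique (integral_tendsto_of_tendsto_of_monotone hf h_int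
    (h_ae.mono fun _ hx ↦ hx.1) h_tendsto) h_lim, fun n ↦ ?_, ?_⟩
  · filter_upwards [h_bdd] with x hx using le_ciSup hx n
  · filter_upwards [h_ae] with x hx using ciSup_le hx.2

theorem _root_.MeasureTheory.condExp_piecewise {α : Type*} {m m₀ : MeasurableSpace α}
    {μ : Measure[m₀] α} {B : Set α} [DecidablePred (· ∈ B)] (hB : MeasurableSet[m] B) {f g : α → ℝ}
    (hf : Integrable f μ) (hg : Integrable g μ) :
    μ[B.piecewise f g | m] =ᵐ[μ] B.piecewise (μ[f | m]) (μ[g | m]) := by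
  have h_split : ∀ u v : α → ℝ, B.piecewise u v = B.indicator u + Bᶜ.indicator v := by
    intro u v
    ext ω
    by_cases hω : ω ∈ B <;> simp [hω]
  by_cases hm : m ≤ m₀
  · rw [h_split, h_split]
    have hBc : MeasurableSet[m] Bᶜ := hB.compl
    refine (condExp_add (hf.indicator (hm B hB)) (hg.indicator (hm _ hBc)) m).trans ?_
    filter_upwards [condExp_indicator hf hB, condExp_indicator hg hBc] with ω h₁ h₂
    simp only [Pi.add_apply, h₁, h₂]
  · simp only [condExp_of_not_le hm, Set.piecewise_same]
    rfl

section EssSup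

variable {ι : Type*} {μ : Measure Ω} {A : Set ι} {f : ι → Ω → ℝ} {g : Ω → ℝ}

/-- The supremum of a chain whose integrals approach `sSup` dominates the whole family: the
supremum of any richer chain is larger and has the same integral. -/
theorem ae_le_iSup_of_tendsto_sSup (hdir : DirectedOn (fun i j ↦ f i ≤ᵐ[μ] f j) A)
    (hint : ∀ i ∈ A, Integrable (f i) μ) (hub : ∀ i ∈ A, f i ≤ᵐ[μ] g)
    (hbdd : BddAbove ((fun i ↦ ∫ x, f i x ∂μ) '' A))
    {ζ : ℕ → ι} (hζA : ∀ n, ζ n ∈ A) (hζ_mono : ∀ n, f (ζ n) ≤ᵐ[μ] f (ζ (n + 1)))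
    (hζ_lim : Tendsto (fun n ↦ ∫ x, f (ζ n) x ∂μ) atTop
      (nhds (sSup ((fun i ↦ ∫ x, f i x ∂μ) '' A))))
    {i : ι} (hi : i ∈ A) : f i ≤ᵐ[μ] fun x ↦ ⨆ n, f (ζ n) x := by
  obtain ⟨H_int, H_eq, -, -⟩ :=
    integral_iSup_eq_of_monotone (fun n ↦ hint _ (hζA n)) hζ_mono (fun n ↦ hub _ (hζA n)) hζ_lim
  choose k hkA hik hζk using fun n ↦ hdir i hi (ζ n) (hζA n)
  obtain ⟨ζ', hζ'A, hζ'_mono, hkζ'⟩ := hdir.exists_seq_rel_succ hkA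
  have hζ'_lim : Tendsto (fun n ↦ ∫ x, f (ζ' n) x ∂μ) atTop
      (nhds (sSup ((fun i ↦ ∫ x, f i x ∂μ) '' A))) :=
    tendsto_of_tendsto_of_tendsto_of_le_of_le hζ_lim tendsto_const_nhds
      (fun n ↦ integral_mono_ae (hint _ (hζA n)) (hint _ (hζ'A n)) ((hζk n).trans (hkζ' n)))
      (fun n ↦ le_csSup hbdd (mem_image_of_mem _ (hζ'A n)))
  obtain ⟨H'_int, H'_eq, H'_ge, -⟩ := integral_iSup_eq_of_monotone (fun n ↦ hint _ (hζ'A n))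
    hζ'_mono (fun n ↦ hub _ (hζ'A n)) hζ'_lim
  have hH_le : (fun x ↦ ⨆ n, f (ζ n) x) ≤ᵐ[μ] fun x ↦ ⨆ n, f (ζ' n) x := by
    have : ∀ n, f (ζ n) ≤ᵐ[μ] fun x ↦ ⨆ n, f (ζ' n) x :=
      fun n ↦ (hζk n).trans ((hkζ' n).trans (H'_ge n))
    filter_upwards [ae_all_iff.2 this] with x hx using ciSup_le hx
  have hH_eq := (integral_eq_iff_of_ae_le H_int H'_int hH_le).1 (H_eq.trans H'_eq.symm)
  exact (hik 0).trans ((hkζ' 0).trans ((H'_ge 0).trans hH_eq.symm.le))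

/-- With the junk values, both sides are `0` when the integrals are unbounded. -/
theorem IsEssSupOn.integral_eq_sSup (hg : IsEssSupOn μ A f g) (hA : A.Nonempty)
    (hdir : DirectedOn (fun i j ↦ f i ≤ᵐ[μ] f j) A) (hint : ∀ i ∈ A, Integrable (f i) μ) :
    ∫ x, g x ∂μ = sSup ((fun i ↦ ∫ x, f i x ∂μ) '' A) := by
  set S := (fun i ↦ ∫ x, f i x ∂μ) '' A
  by_cases hbdd : BddAbove S
  swap
  · have hg_int : ¬ Integrable g μ := fun hg_int ↦ hbdd ⟨∫ x, g x ∂μ,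
      forall_mem_image.2 fun i hi ↦ integral_mono_ae (hint i hi) hg_int (hg.1 i hi)⟩
    rw [integral_undef hg_int, Real.sSup_of_not_bddAbove hbdd]
  obtain ⟨u, -, hu_lim, hu_mem⟩ := exists_seq_tendsto_sSup (hA.image _) hbdd
  choose j hjA hju using hu_mem
  obtain ⟨ζ, hζA, hζ_mono, hjζ⟩ := hdir.exists_seq_rel_succ hjA
  have hζ_lim : Tendsto (fun n ↦ ∫ x, f (ζ n) x ∂μ) atTop (nhds (sSup S)) :=
    tendsto_of_tendsto_of_tendsto_of_le_of_le hu_lim tendsto_const_nhds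
      (fun n ↦ (hju n).symm.le.trans (integral_mono_ae (hint _ (hjA n)) (hint _ (hζA n)) (hjζ n)))
      (fun n ↦ le_csSup hbdd (mem_image_of_mem _ (hζA n)))
  obtain ⟨-, H_eq, -, H_le⟩ := integral_iSup_eq_of_monotone (fun n ↦ hint _ (hζA n)) hζ_mono
    (fun n ↦ hg.1 _ (hζA n)) hζ_lim
  have hg_le := hg.2 _ fun i hi ↦ ae_le_iSup_of_tendsto_sSup hdir hint hg.1 hbdd hζA hζ_mono
    hζ_lim hi
  rw [← H_eq]
  exact integral_congr_ae (hg_le.antisymm H_le)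

end EssSup

open Classical in
/-- An element with non-integrable payoff can be replaced by `0`, which has the same (junk)
conditional expectation `0`; two elements with integrable payoffs are pasted along the event
where the first has the larger conditional expectation. -/
theorem _root_.MeasureTheory.directedOn_condExp_of_piecewise_mem {X α : Type*} [Zero α]
    {m m₀ : MeasurableSpace X} {μ : Measure[m₀] X} (c : X → α → ℝ) (hc : ∀ ω, c ω 0 = 0) {𝒜 : Set (X → α)} (h0 : 0 ∈ 𝒜)
    (hpw : ∀ η₁ ∈ 𝒜, ∀ η₂ ∈ 𝒜, ∀ B, MeasurableSet[m] B → B.piecewise η₁ η₂ ∈ 𝒜) :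
    DirectedOn (fun η η' ↦ μ[fun ω ↦ c ω (η ω) | m] ≤ᵐ[μ] μ[fun ω ↦ c ω (η' ω) | m]) 𝒜 := by
  have h_repl : ∀ η ∈ 𝒜, ∃ η' ∈ 𝒜, Integrable (fun ω ↦ c ω (η' ω)) μ ∧
      μ[fun ω ↦ c ω (η' ω) | m] = μ[fun ω ↦ c ω (η ω) | m] := by
    intro η hη
    by_cases h : Integrable (fun ω ↦ c ω (η ω)) μ
    · exact ⟨η, hη, h, rfl⟩
    · refine ⟨0, h0, by simp [hc], ?_⟩
      simp only [Pi.zero_apply, hc, condExp_of_not_integrable h]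
      exact condExp_zero
  intro η₁ h₁ η₂ h₂
  dsimp only
  obtain ⟨η₁, h₁, hi₁, he₁⟩ := h_repl η₁ h₁
  obtain ⟨η₂, h₂, hi₂, he₂⟩ := h_repl η₂ h₂
  rw [← he₁, ← he₂]
  set f₁ := μ[fun ω ↦ c ω (η₁ ω) | m]
  set f₂ := μ[fun ω ↦ c ω (η₂ ω) | m]
  set B := {ω | f₂ ω ≤ f₁ ω}
  have hB : MeasurableSet[m] B :=
    measurableSet_le stronglyMeasurable_condExp.measurable stronglyMeasurable_condExp.measurable
  have h_paste : (fun ω ↦ c ω (B.piecewise η₁ η₂ ω)) =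
      B.piecewise (fun ω ↦ c ω (η₁ ω)) (fun ω ↦ c ω (η₂ ω)) := by
    ext ω
    by_cases hω : ω ∈ B <;> simp [hω]
  have h_max : μ[fun ω ↦ c ω (B.piecewise η₁ η₂ ω) | m] =ᵐ[μ] fun ω ↦ max (f₁ ω) (f₂ ω) := by
    rw [h_paste]
    filter_upwards [condExp_piecewise hB hi₁ hi₂] with ω hω
    rw [hω, max_def']
    rfl
  refine ⟨B.piecewise η₁ η₂, hpw η₁ h₁ η₂ h₂ B hB, ?_, ?_⟩
  · filter_upwards [h_max] with ω hω using hω ▸ le_max_left _ _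
  · filter_upwards [h_max] with ω hω using hω ▸ le_max_right _ _

section Paste

variable {X β γ : Type*} [Zero β] [Zero γ]

open Classical in
/-- Holding nothing up to time `s` keeps the pasted strategy predictable, although `B` is only
`F_s`-measurable. -/
def pasteAfter (s : ℝ) (B : Set X) (f g : ℝ → X → β) : ℝ → X → β :=
  fun t ↦ if s < t then B.piecewise (f t) (g t) else 0

open Classical in
theorem pasteAfter_eq_piecewise {s t : ℝ} {B : Set X} {f g : ℝ → X → β} {ω : X} (ht : s ≤ t)
    (hf : f s ω = 0) (hg : g s ω = 0) : pasteAfter s B f g t ω = B.piecewise (f t) (g t) ω := by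
  rcases ht.lt_or_eq with ht | rfl
  · simp [pasteAfter, ht]
  · by_cases hω : ω ∈ B <;> simp [pasteAfter, hω, hf, hg]

theorem pasteAfter_self {s : ℝ} {B : Set X} {f g : ℝ → X → β} : pasteAfter s B f g s = 0 := by
  simp [pasteAfter]

theorem pasteAfter_map (φ : β → γ) (hφ : φ 0 = 0) (s : ℝ) (B : Set X) (f g : ℝ → X → β) :
    (fun t ω ↦ φ (pasteAfter s B f g t ω)) =
      pasteAfter s B (fun t ω ↦ φ (f t ω)) (fun t ω ↦ φ (g t ω)) := by
  ext t ω
  unfold pasteAfter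
  split_ifs
  · by_cases hω : ω ∈ B <;> simp [hω]
  · exact hφ

end Paste

theorem predictable_pasteAfter {F : Filtration ℝ m0} {s : ℝ} {B : Set Ω}
    (hB : MeasurableSet[F s] B) {f g : ℝ → Ω → ℝ} (hf : Predictable F f) (hg : Predictable F g) :
    Predictable F (pasteAfter s B f g) := by
  have h_after : ∀ {C : Set Ω}, MeasurableSet[F s] C →
      MeasurableSet[MeasurableSpace.generateFrom (predictableSets F)] (Ioi s ×ˢ C) := by
    intro C hC
    have h_Ioi : Ioi s = ⋃ n : ℕ, Ioc s (s + n) := by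
      ext t
      simp only [mem_Ioi, mem_iUnion, mem_Ioc]
      exact ⟨fun ht ↦ (exists_nat_ge (t - s)).imp fun n hn ↦ ⟨ht, by linarith⟩,
        fun ⟨_, ht, _⟩ ↦ ht⟩
    rw [h_Ioi, iUnion_prod_const]
    exact MeasurableSet.iUnion fun n ↦
      MeasurableSpace.measurableSet_generateFrom ⟨s, s + n, C, hC, rfl⟩
  classical
  have h_eq : Function.uncurry (pasteAfter s B f g) = (Ioi s ×ˢ B).piecewise
      (Function.uncurry f) ((Ioi s ×ˢ Bᶜ).piecewise (Function.uncurry g) 0) := by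
    ext ⟨t, ω⟩
    by_cases ht : s < t <;> by_cases hω : ω ∈ B <;> simp [pasteAfter, ht, hω]
  unfold Predictable
  rw [h_eq]
  exact hf.piecewise (h_after hB) (hg.piecewise (h_after hB.compl) measurable_const)

section Market

variable (M : Market Ω)

theorem liq_mono {t : ℝ} {ω : Ω} {x y : ℝ × ℝ} (h : x ≤ y) : liq M t x ω ≤ liq M t y ω := by
  have hS := M.S_pos t ω
  have h_sell : 0 ≤ (1 - M.lam) * M.S t ω := mul_nonneg (by linarith [M.lam_lt_one]) hS.le
  have h_buy : 0 ≤ (1 + M.lam) * M.S t ω := mul_nonneg (by linarith [M.lam_pos]) hS.le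
  unfold liq
  gcongr
  exacts [h.1, h.2, h.2]

theorem MemL1plusQ.add {s : ℝ} {X Y : Ω → ℝ} (hX : MemL1plusQ M s X) (hY : MemL1plusQ M s Y) :
    MemL1plusQ M s (X + Y) :=
  ⟨⟨hX.1.1.add hY.1.1, fun Q hQ ↦ (hX.1.2 Q hQ).add (hY.1.2 Q hQ)⟩,
    by filter_upwards [hX.2, hY.2] with ω hXω hYω using add_nonneg hXω hYω⟩

theorem MemLinfplusQ.add {s : ℝ} {X Y : Ω → ℝ} (hX : MemLinfplusQ M s X)
    (hY : MemLinfplusQ M s Y) : MemLinfplusQ M s (X + Y) := by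
  obtain ⟨⟨hX_meas, CX, hCX⟩, hX_nonneg⟩ := hX
  obtain ⟨⟨hY_meas, CY, hCY⟩, hY_nonneg⟩ := hY
  refine ⟨⟨hX_meas.add hY_meas, CX + CY, ?_⟩, ?_⟩
  · filter_upwards [hCX, hCY] with ω hXω hYω using (abs_add_le _ _).trans (add_le_add hXω hYω)
  · filter_upwards [hX_nonneg, hY_nonneg] with ω hXω hYω using add_nonneg hXω hYω

theorem zero_mem_Aset (s : ℝ) : (0 : Ω → ℝ × ℝ) ∈ Aset M s := by
  refine ⟨0, ⟨measurable_const, measurable_const, fun _ ↦ 0, fun _ ↦ 0, fun _ ↦ 0, fun _ ↦ 0,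
    fun _ ↦ inferInstance, fun _ ↦ inferInstance, fun _ ↦ inferInstance, fun _ ↦ inferInstance,
    fun _ _ _ ↦ by simp, fun _ _ _ _ ↦ by simp⟩, fun _ ↦ rfl, ⟨0, 0, ?_, ?_, fun _ _ _ ↦ ?_⟩, fun _ ↦ rfl⟩
  · exact ⟨⟨stronglyMeasurable_const, fun _ _ ↦ integrable_zero _ _ _⟩, ae_of_all _ fun _ ↦ le_rfl⟩
  · exact ⟨⟨stronglyMeasurable_const, 0, ae_of_all _ fun _ ↦ by simp⟩, ae_of_all _ fun _ ↦ le_rfl⟩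
  · exact ae_of_all _ fun _ ↦ by simp [liqAtTime, liq]

theorem zero_mem_Lb0 : (0 : Ω → ℝ × ℝ) ∈ Lb0 M := by
  refine ⟨1, one_pos, ae_of_all _ fun ω ↦ ?_⟩
  have h_sell : 0 < (1 - M.lam) * M.S M.T ω :=
    mul_pos (by linarith [M.lam_lt_one]) (M.S_pos M.T ω)
  norm_num [liq]
  linarith

open Classical in
theorem piecewise_mem_Lb0 (B : Set Ω) {η₁ η₂ : Ω → ℝ × ℝ} (h₁ : η₁ ∈ Lb0 M) (h₂ : η₂ ∈ Lb0 M) :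
    B.piecewise η₁ η₂ ∈ Lb0 M := by
  obtain ⟨c₁, hc₁, hη₁⟩ := h₁
  obtain ⟨c₂, hc₂, hη₂⟩ := h₂
  have h_shift : ∀ {c c' : ℝ} (x : ℝ × ℝ), c ≤ c' → x - (-c, -c) ≤ x - (-c', -c') :=
    fun x h ↦ sub_le_sub_left (Prod.mk_le_mk.2 ⟨neg_le_neg h, neg_le_neg h⟩) x
  refine ⟨max c₁ c₂, lt_max_of_lt_left hc₁, ?_⟩
  filter_upwards [hη₁, hη₂] with ω hω₁ hω₂
  by_cases hω : ω ∈ B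
  · rw [Set.piecewise_eq_of_mem _ _ _ hω]
    exact hω₁.trans (liq_mono M (h_shift _ (le_max_left _ _)))
  · rw [Set.piecewise_eq_of_notMem _ _ _ hω]
    exact hω₂.trans (liq_mono M (h_shift _ (le_max_right _ _)))

open Classical in
theorem isSelfFinancing_pasteAfter {s : ℝ} {B : Set Ω} (hB : MeasurableSet[M.F s] B)
    {φ₁ φ₂ : ℝ → Ω → ℝ × ℝ} (h₁ : IsSelfFinancing M s φ₁) (h₂ : IsSelfFinancing M s φ₂)
    (h0₁ : ∀ ω, φ₁ s ω = 0) (h0₂ : ∀ ω, φ₂ s ω = 0) :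
    IsSelfFinancing M s (pasteAfter s B φ₁ φ₂) := by
  obtain ⟨hp1₁, hp2₁, a1u, a1d, a2u, a2d, fa1u, fa1d, fa2u, fa2d, heq₁, hin₁⟩ := h₁
  obtain ⟨hp1₂, hp2₂, b1u, b1d, b2u, b2d, fb1u, fb1d, fb2u, fb2d, heq₂, hin₂⟩ := h₂
  have h_fin : ∀ {ν₁ ν₂ : Ω → Measure ℝ}, (∀ ω, IsFiniteMeasure (ν₁ ω)) →
      (∀ ω, IsFiniteMeasure (ν₂ ω)) → ∀ ω, IsFiniteMeasure (B.piecewise ν₁ ν₂ ω) := by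
    intro ν₁ ν₂ h₁ h₂ ω
    by_cases hω : ω ∈ B
    · rw [Set.piecewise_eq_of_mem _ _ _ hω]; exact h₁ ω
    · rw [Set.piecewise_eq_of_notMem _ _ _ hω]; exact h₂ ω
  refine ⟨?_, ?_, B.piecewise a1u b1u, B.piecewise a1d b1d, B.piecewise a2u b2u,
    B.piecewise a2d b2d, h_fin fa1u fb1u, h_fin fa1d fb1d, h_fin fa2u fb2u, h_fin fa2d fb2d,
    fun ω t ht ↦ ?_, fun ω E hE hEs ↦ ?_⟩
  · rw [pasteAfter_map Prod.fst rfl]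
    exact predictable_pasteAfter hB hp1₁ hp1₂
  · rw [pasteAfter_map Prod.snd rfl]
    exact predictable_pasteAfter hB hp2₁ hp2₂
  · rw [pasteAfter_eq_piecewise ht.1 (h0₁ ω) (h0₂ ω),
      pasteAfter_eq_piecewise le_rfl (h0₁ ω) (h0₂ ω)]
    by_cases hω : ω ∈ B
    · simpa only [Set.piecewise_eq_of_mem _ _ _ hω] using heq₁ ω t ht
    · simpa only [Set.piecewise_eq_of_notMem _ _ _ hω] using heq₂ ω t ht
  · by_cases hω : ω ∈ B
    · simpa only [Set.piecewise_eq_of_mem _ _ _ hω] using hin₁ ω E hE hEs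
    · simpa only [Set.piecewise_eq_of_notMem _ _ _ hω] using hin₂ ω E hE hEs

open Classical in
/-- Admissibility only involves times `τ ≥ s`, at which the pasted strategy is one of the two. -/
theorem admissibleNF_pasteAfter {s : ℝ} (B : Set Ω) {φ₁ φ₂ : ℝ → Ω → ℝ × ℝ}
    (h₁ : AdmissibleNF M s φ₁) (h₂ : AdmissibleNF M s φ₂)
    (h0₁ : ∀ ω, φ₁ s ω = 0) (h0₂ : ∀ ω, φ₂ s ω = 0) :
    AdmissibleNF M s (pasteAfter s B φ₁ φ₂) := by
  obtain ⟨M11, M21, hM11, hM21, hW₁⟩ := h₁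
  obtain ⟨M12, M22, hM12, hM22, hW₂⟩ := h₂
  refine ⟨M11 + M12, M21 + M22, hM11.add M hM12, hM21.add M hM22, fun τ hτ hτs ↦ ?_⟩
  filter_upwards [hW₁ τ hτ hτs, hW₂ τ hτ hτs, hM11.2, hM12.2, hM21.2, hM22.2]
    with ω hω₁ hω₂ h11 h12 h21 h22
  have hS := (M.S_pos (τ ω) ω).le
  have h_paste : liqAtTime M τ (pasteAfter s B φ₁ φ₂) ω =
      B.piecewise (liqAtTime M τ φ₁) (liqAtTime M τ φ₂) ω := by
    simp only [liqAtTime, pasteAfter_eq_piecewise (hτs ω).1 (h0₁ ω) (h0₂ ω)]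
    by_cases hω : ω ∈ B <;> simp [hω, liqAtTime]
  rw [h_paste, Pi.add_apply, Pi.add_apply]
  by_cases hω : ω ∈ B
  · rw [Set.piecewise_eq_of_mem _ _ _ hω]
    nlinarith
  · rw [Set.piecewise_eq_of_notMem _ _ _ hω]
    nlinarith

open Classical in
theorem piecewise_mem_Aset {s : ℝ} (hsT : s ≤ M.T) {B : Set Ω} (hB : MeasurableSet[M.F s] B)
    {η₁ η₂ : Ω → ℝ × ℝ} (h₁ : η₁ ∈ Aset M s) (h₂ : η₂ ∈ Aset M s) :
    B.piecewise η₁ η₂ ∈ Aset M s := by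
  obtain ⟨φ₁, hsf₁, h0₁, hadm₁, hT₁⟩ := h₁
  obtain ⟨φ₂, hsf₂, h0₂, hadm₂, hT₂⟩ := h₂
  refine ⟨pasteAfter s B φ₁ φ₂, isSelfFinancing_pasteAfter M hB hsf₁ hsf₂ h0₁ h0₂,
    fun ω ↦ by rw [pasteAfter_self]; rfl, admissibleNF_pasteAfter M B hadm₁ hadm₂ h0₁ h0₂,
    fun ω ↦ ?_⟩
  rw [pasteAfter_eq_piecewise hsT (h0₁ ω) (h0₂ ω)]
  by_cases hω : ω ∈ B <;> simp [hω, hT₁, hT₂]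

end Market

theorem stmt14_general (M : Market Ω) (s : ℝ) (hs : s ∈ Icc 0 M.T)
    (Z : Ω → ℝ × ℝ) (g : Ω → ℝ)
    (hg : IsEssSupOn M.P (Aset M s ∩ Lb0 M)
      (fun η => MeasureTheory.condExp (M.F s) M.P (fun ω => dot (η ω) (Z ω))) g) :
    ∫ ω, g ω ∂M.P =
      sSup {r : ℝ | ∃ η ∈ Aset M s ∩ Lb0 M, r = ∫ ω, dot (η ω) (Z ω) ∂M.P} := by
  have := M.probP
  have h0 : (0 : Ω → ℝ × ℝ) ∈ Aset M s ∩ Lb0 M := ⟨zero_mem_Aset M s, zero_mem_Lb0 M⟩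
  have hdir := directedOn_condExp_of_piecewise_mem (m := M.F s) (μ := M.P)
    (fun ω x ↦ dot x (Z ω)) (fun _ ↦ by simp [dot]) h0 fun η₁ h₁ η₂ h₂ B hB ↦
      ⟨piecewise_mem_Aset M hs.2 hB h₁.1 h₂.1, piecewise_mem_Lb0 M B h₁.2 h₂.2⟩
  rw [hg.integral_eq_sSup ⟨0, h0⟩ hdir fun _ _ ↦ integrable_condExp]
  congr 1
  ext r
  simp only [mem_image, mem_ofPred_eq, integral_condExp (M.F.le s), eq_comm]

/-- `E_P[esssup_η E_P[η·Z_T|F_s]] = sup_η E_P[η·Z_T]`. -/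
theorem stmt14 (M : Market Ω) (s : ℝ) (hs : s ∈ Icc 0 M.T)
    (Z : Ω → ℝ × ℝ) (hZ : MemL1Polar M Z) (g : Ω → ℝ)
    (hg : IsEssSupOn M.P (Aset M s ∩ Lb0 M)
      (fun η => MeasureTheory.condExp (M.F s) M.P (fun ω => dot (η ω) (Z ω))) g) :
    ∫ ω, g ω ∂M.P =
      sSup {r : ℝ | ∃ η ∈ Aset M s ∩ Lb0 M, r = ∫ ω, dot (η ω) (Z ω) ∂M.P} :=
  stmt14_general M s hs Z g hg

end TransactionCosts
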